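/- arXiv:0909.0569 — 2 statements merged into one kernel-verified Lean document; each statement's English description precedes it below -/
import Mathlib

section
/- Let M be a topological abelian monoid with the cancellation property and let N ⊆ M be a submonoid. Suppose that the quotient monoid M/N (with the quotient topology) is a topological abelian monoid, that the naive group completion M⁺ is a topological group, and that the subgroup N⁺ = { q(n, n′) : n, n′ ∈ N } of M⁺ is closed. Then the canonical group isomorphism (M/N)⁺ → M⁺/N⁺ (induced by the quotient maps M → M/N and M⁺ → M⁺/N⁺) is an isomorphism of topological groups, i.e., a group isomorphism that is also a homeomorphism. -/
/-!
Both canonical maps come from universal properties of quotients. The map `(M/N)⁺ → M⁺/N⁺` sends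
`q(x, y)` to `φ x - φ y` for the continuous map `φ : M/N → M⁺/N⁺` induced by `M → M⁺ → M⁺/N⁺`;
it is continuous because subtraction on `M⁺/N⁺` is, `M⁺` being a topological group. The inverse
`M⁺/N⁺ → (M/N)⁺` is induced by the continuous map `M × M → M/N × M/N`, so its continuity needs
nothing at all.
-/

universe u

/-- The generating relation for the naive group completion of a topological abelian monoid:
`(a, b) ∼ (m + a, m + b)` for all `m`. -/
def gcRel (M : Type u) [AddCommMonoid M] : M × M → M × M → Prop :=
  fun p q => ∃ m : M, q.1 = m + p.1 ∧ q.2 = m + p.2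

/-- The naive group completion `M⁺` of an abelian monoid `M`: the quotient of `M × M` by the
equivalence relation generated by the diagonal translation action of `M`. -/
def GC (M : Type u) [AddCommMonoid M] : Type u := Quot (gcRel M)

namespace GC

variable {M : Type u} [AddCommMonoid M]

/-- `q(a, b)`, the class of `(a, b)` in the naive group completion. -/
def mk (p : M × M) : GC M := Quot.mk _ p

instance [TopologicalSpace M] : TopologicalSpace (GC M) :=
  inferInstanceAs (TopologicalSpace (Quot (gcRel M)))

protected def add : GC M → GC M → GC M :=
  Quot.map₂ (fun p q => (p.1 + q.1, p.2 + q.2))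
    (fun p q q' h => by
      obtain ⟨m, h1, h2⟩ := h
      refine ⟨m, ?_, ?_⟩
      · show p.1 + q'.1 = m + (p.1 + q.1)
        rw [h1]; exact add_left_comm _ _ _
      · show p.2 + q'.2 = m + (p.2 + q.2)
        rw [h2]; exact add_left_comm _ _ _)
    (fun p p' q h => by
      obtain ⟨m, h1, h2⟩ := h
      refine ⟨m, ?_, ?_⟩
      · show p'.1 + q.1 = m + (p.1 + q.1)
        rw [h1]; exact add_assoc _ _ _
      · show p'.2 + q.2 = m + (p.2 + q.2)
        rw [h2]; exact add_assoc _ _ _)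

protected def neg : GC M → GC M :=
  Quot.map (fun p => (p.2, p.1)) (fun _ _ h => by
    obtain ⟨m, h1, h2⟩ := h
    exact ⟨m, h2, h1⟩)

instance : Zero (GC M) := ⟨GC.mk (0, 0)⟩
instance : Add (GC M) := ⟨GC.add⟩
instance : Neg (GC M) := ⟨GC.neg⟩

instance : AddCommGroup (GC M) where
  add := (· + ·)
  zero := 0
  neg := (- ·)
  add_assoc := by
    rintro ⟨p⟩ ⟨q⟩ ⟨s⟩
    exact congrArg (Quot.mk _) (by simp [add_assoc])
  zero_add := by
    rintro ⟨p⟩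
    exact congrArg (Quot.mk _) (by simp)
  add_zero := by
    rintro ⟨p⟩
    exact congrArg (Quot.mk _) (by simp)
  add_comm := by
    rintro ⟨p⟩ ⟨q⟩
    exact congrArg (Quot.mk _) (by simp [add_comm])
  neg_add_cancel := by
    rintro ⟨p⟩
    exact (Quot.sound ⟨p.2 + p.1, (add_zero _).symm, by rw [add_zero, add_comm]⟩).symm
  nsmul := nsmulRec
  nsmul_zero := fun _ => rfl
  nsmul_succ := fun _ _ => rfl
  zsmul := zsmulRec
  zsmul_zero' := fun _ => rfl
  zsmul_succ' := fun _ _ => rfl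
  zsmul_neg' := fun _ _ => rfl

@[simp] theorem mk_add (p q : M × M) : mk p + mk q = mk (p.1 + q.1, p.2 + q.2) := rfl

@[simp] theorem mk_neg (p : M × M) : -(mk p) = mk (p.2, p.1) := rfl

/-- The map on the naive group completion induced by a monoid endomorphism. -/
def map (σ : M →+ M) : GC M → GC M :=
  Quot.map (fun p => (σ p.1, σ p.2)) (fun p q h => by
    obtain ⟨m, h1, h2⟩ := h
    refine ⟨σ m, ?_, ?_⟩
    · show σ q.1 = σ m + σ p.1
      rw [h1, map_add]
    · show σ q.2 = σ m + σ p.2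
      rw [h2, map_add])

@[simp] theorem map_mk (σ : M →+ M) (p : M × M) : map σ (mk p) = mk (σ p.1, σ p.2) := rfl

theorem map_add' (σ : M →+ M) (x y : GC M) : map σ (x + y) = map σ x + map σ y := by
  rcases x with ⟨p⟩; rcases y with ⟨q⟩
  exact congrArg (Quot.mk _) (by simp)

theorem map_zero' (σ : M →+ M) : map σ (0 : GC M) = 0 :=
  congrArg (Quot.mk _) (by simp)

theorem map_neg' (σ : M →+ M) (x : GC M) : map σ (-x) = -(map σ x) := by
  rcases x with ⟨p⟩
  rfl

end GC

/-- The congruence relation on `M` induced by a submonoid `N`: `a ∼ b` iff there are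
`n, n' ∈ N` with `a + n = b + n'`; the quotient is the quotient monoid `M/N`. -/
def modCon {M : Type u} [AddCommMonoid M] (N : AddSubmonoid M) : AddCon M where
  r a b := ∃ n ∈ N, ∃ n' ∈ N, a + n = b + n'
  iseqv :=
    { refl := fun _ => ⟨0, N.zero_mem, 0, N.zero_mem, rfl⟩
      symm := fun h => by
        obtain ⟨n, hn, n', hn', h⟩ := h
        exact ⟨n', hn', n, hn, h.symm⟩
      trans := fun h h' => by
        obtain ⟨n, hn, n', hn', h1⟩ := h
        obtain ⟨m, hm, m', hm', h2⟩ := h'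
        refine ⟨n + m, N.add_mem hn hm, m' + n', N.add_mem hm' hn', ?_⟩
        rw [← add_assoc, h1, add_right_comm, h2, add_assoc] }
  add' := fun h h' => by
    obtain ⟨n, hn, n', hn', h1⟩ := h
    obtain ⟨m, hm, m', hm', h2⟩ := h'
    exact ⟨n + m, N.add_mem hn hm, n' + m', N.add_mem hn' hm', by
      rw [add_add_add_comm, h1, h2, add_add_add_comm]⟩

instance modConTop {M : Type u} [AddCommMonoid M] [TopologicalSpace M] (N : AddSubmonoid M) :
    TopologicalSpace (modCon N).Quotient :=
  inferInstanceAs (TopologicalSpace (Quotient (modCon N).toSetoid))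

/-- The canonical quotient map `M → M/N`. -/
def modMk {M : Type u} [AddCommMonoid M] (N : AddSubmonoid M) (a : M) : (modCon N).Quotient :=
  Quotient.mk _ a

/-- The subgroup `N⁺ = { q(n, n') : n, n' ∈ N }` of the naive group completion `M⁺`. -/
def gcSubgroup {M : Type u} [AddCommMonoid M] (N : AddSubmonoid M) : AddSubgroup (GC M) where
  carrier := { x | ∃ n ∈ N, ∃ n' ∈ N, x = GC.mk (n, n') }
  zero_mem' := ⟨0, N.zero_mem, 0, N.zero_mem, rfl⟩
  add_mem' := by
    rintro x y ⟨n, hn, n', hn', rfl⟩ ⟨m, hm, m', hm', rfl⟩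
    exact ⟨n + m, N.add_mem hn hm, n' + m', N.add_mem hn' hm', rfl⟩
  neg_mem' := by
    rintro x ⟨n, hn, n', hn', rfl⟩
    exact ⟨n', hn', n, hn, rfl⟩

namespace GC

variable {M M' : Type*} [AddCommMonoid M] [AddCommMonoid M']

theorem mk_eq_mk_of_add_eq {a b c d : M} (h : a + d = b + c) : mk (a, b) = mk (c, d) := by
  have had : mk (a, b) = mk (d + a, d + b) := Quot.sound ⟨d, rfl, rfl⟩
  have hbc : mk (c, d) = mk (b + c, b + d) := Quot.sound ⟨b, rfl, rfl⟩
  rw [had, hbc, add_comm d a, h, add_comm d b]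

def of : M →+ GC M where
  toFun a := mk (a, 0)
  map_zero' := rfl
  map_add' a b := by rw [mk_add, add_zero]

theorem mk_eq_of_sub_of (a b : M) : mk (a, b) = of a - of b := by
  rw [sub_eq_add_neg]
  simp only [of, AddMonoidHom.coe_mk, ZeroHom.coe_mk, mk_neg, mk_add, add_zero, zero_add]

theorem continuous_of [TopologicalSpace M] : Continuous (of : M → GC M) :=
  continuous_quot_mk.comp (continuous_id.prodMk continuous_const)

theorem induction_on {p : GC M → Prop} (x : GC M) (h : ∀ a b, p (mk (a, b))) : p x :=
  Quot.ind (fun q => h q.1 q.2) x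

section lift

variable {G : Type*} [AddCommGroup G]

def lift (f : M →+ G) : GC M →+ G where
  toFun := Quot.lift (fun p => f p.1 - f p.2) fun p q ⟨m, h1, h2⟩ => by
    rw [h1, h2, map_add, map_add, add_sub_add_left_eq_sub]
  map_zero' := sub_self (f 0)
  map_add' := by
    rintro ⟨p⟩ ⟨q⟩
    show f (p.1 + q.1) - f (p.2 + q.2) = (f p.1 - f p.2) + (f q.1 - f q.2)
    rw [map_add, map_add, add_sub_add_comm]

theorem continuous_lift [TopologicalSpace M] [TopologicalSpace G] [ContinuousSub G]
    {f : M →+ G} (hf : Continuous f) : Continuous (lift f) :=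
  continuous_quot_lift _ ((hf.comp continuous_fst).sub (hf.comp continuous_snd))

end lift

/-- Unlike `lift (of.comp f)`, this is continuous for continuous `f` without any topological
group structure on `M'⁺`. -/
def mapAddHom (f : M →+ M') : GC M →+ GC M' where
  toFun := Quot.map (Prod.map f f) (by
    rintro p q ⟨m, h1, h2⟩
    exact ⟨f m, by simp [h1], by simp [h2]⟩)
  map_zero' := by
    show mk (f 0, f 0) = mk (0, 0)
    rw [map_zero]
  map_add' := by
    rintro ⟨p⟩ ⟨q⟩
    show mk (f (p.1 + q.1), f (p.2 + q.2)) = mk (f p.1 + f q.1, f p.2 + f q.2)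
    rw [map_add, map_add]

@[simp] theorem mapAddHom_mk (f : M →+ M') (a b : M) :
    mapAddHom f (mk (a, b)) = mk (f a, f b) := rfl

theorem continuous_mapAddHom [TopologicalSpace M] [TopologicalSpace M'] {f : M →+ M'}
    (hf : Continuous f) : Continuous (mapAddHom f) :=
  continuous_quot_lift _ (continuous_quot_mk.comp (hf.prodMap hf))

end GC

section quotient

variable {M : Type*} [AddCommMonoid M] (N : AddSubmonoid M)

theorem GC.mk_mem_gcSubgroup_of_modCon {a b : M} (h : modCon N a b) :
    GC.mk (a, b) ∈ gcSubgroup N := by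
  obtain ⟨n, hn, n', hn', hab⟩ := h
  exact ⟨n', hn', n, hn, GC.mk_eq_mk_of_add_eq hab⟩

def modToQuotientGC : (modCon N).Quotient →+ GC M ⧸ gcSubgroup N :=
  (modCon N).lift ((QuotientAddGroup.mk' _).comp GC.of) fun a b h => by
    show (GC.of a : GC M ⧸ gcSubgroup N) = GC.of b
    rw [QuotientAddGroup.eq_iff_sub_mem, ← GC.mk_eq_of_sub_of]
    exact GC.mk_mem_gcSubgroup_of_modCon N h

def gcModToQuotient : GC (modCon N).Quotient →+ GC M ⧸ gcSubgroup N :=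
  GC.lift (modToQuotientGC N)

theorem gcModToQuotient_mk (a b : M) :
    gcModToQuotient N (GC.mk (modMk N a, modMk N b)) = QuotientAddGroup.mk (GC.mk (a, b)) := by
  rw [GC.mk_eq_of_sub_of a b]
  rfl

theorem gcSubgroup_le_ker_mapAddHom : gcSubgroup N ≤ (GC.mapAddHom (modCon N).mk').ker := by
  rintro _ ⟨n, hn, n', hn', rfl⟩
  have hmk : ∀ m ∈ N, (modCon N).mk' m = 0 := fun m hm =>
    (modCon N).eq.mpr ⟨0, N.zero_mem, m, hm, by rw [add_zero, zero_add]⟩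
  rw [AddMonoidHom.mem_ker, GC.mapAddHom_mk, hmk n hn, hmk n' hn']
  rfl

def quotientToGCMod : GC M ⧸ gcSubgroup N →+ GC (modCon N).Quotient :=
  QuotientAddGroup.lift _ (GC.mapAddHom (modCon N).mk') (gcSubgroup_le_ker_mapAddHom N)

theorem quotientToGCMod_mk (a b : M) :
    quotientToGCMod N (QuotientAddGroup.mk (GC.mk (a, b))) = GC.mk (modMk N a, modMk N b) :=
  rfl

def gcModEquivQuotient : GC (modCon N).Quotient ≃+ GC M ⧸ gcSubgroup N :=
  (gcModToQuotient N).toAddEquiv (quotientToGCMod N)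
    (by
      ext x
      induction x using GC.induction_on with | h a b => ?_
      induction a using Quotient.ind
      induction b using Quotient.ind
      exact (congrArg (quotientToGCMod N) (gcModToQuotient_mk N _ _)).trans
        (quotientToGCMod_mk N _ _))
    (by
      ext x
      induction x using GC.induction_on with | h a b => ?_
      exact gcModToQuotient_mk N a b)

variable [TopologicalSpace M]

theorem continuous_modToQuotientGC : Continuous (modToQuotientGC N) :=
  continuous_quot_lift _ (continuous_quotient_mk'.comp GC.continuous_of)

theorem continuous_gcModToQuotient [IsTopologicalAddGroup (GC M)] :
    Continuous (gcModToQuotient N) :=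
  GC.continuous_lift (continuous_modToQuotientGC N)

theorem continuous_quotientToGCMod : Continuous (quotientToGCMod N) :=
  continuous_quot_lift _ (GC.continuous_mapAddHom continuous_quot_mk)

def gcModContinuousAddEquiv [IsTopologicalAddGroup (GC M)] :
    GC (modCon N).Quotient ≃ₜ+ GC M ⧸ gcSubgroup N where
  toAddEquiv := gcModEquivQuotient N
  continuous_toFun := continuous_gcModToQuotient N
  continuous_invFun := continuous_quotientToGCMod N

end quotient

theorem groupCompletion_quotient_iso_general
    {M : Type u} [AddCancelCommMonoid M] [TopologicalSpace M]
    (N : AddSubmonoid M)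
    (hMplus : IsTopologicalAddGroup (GC M)) :
    ∃ e : GC (modCon N).Quotient ≃ₜ GC M ⧸ gcSubgroup N,
      (∀ x y, e (x + y) = e x + e y) ∧
      ∀ a b : M, e (GC.mk (modMk N a, modMk N b)) = QuotientAddGroup.mk (GC.mk (a, b)) :=
  ⟨(gcModContinuousAddEquiv N).toHomeomorph, map_add (gcModContinuousAddEquiv N),
    gcModToQuotient_mk N⟩

/-- Let `M` be a topological abelian monoid with the cancellation property and
`N ⊆ M` a submonoid.  Suppose the quotient monoid `M/N` (with the quotient topology) is a
topological abelian monoid, the naive group completion `M⁺` is a topological group, and the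
subgroup `N⁺ = { q(n, n') : n, n' ∈ N }` of `M⁺` is closed.  Then the canonical group
isomorphism `(M/N)⁺ → M⁺/N⁺` induced by the quotient maps is an isomorphism of topological
groups: there is a homeomorphism which is additive and is compatible with the canonical
quotient maps. -/
theorem groupCompletion_quotient_iso
    {M : Type u} [AddCancelCommMonoid M] [TopologicalSpace M] [ContinuousAdd M]
    (N : AddSubmonoid M)
    (hMN : ContinuousAdd (modCon N).Quotient)
    (hMplus : IsTopologicalAddGroup (GC M))
    (hNplus : IsClosed ((gcSubgroup N : AddSubgroup (GC M)) : Set (GC M))) :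
    ∃ e : GC (modCon N).Quotient ≃ₜ GC M ⧸ gcSubgroup N,
      (∀ x y, e (x + y) = e x + e y) ∧
      ∀ a b : M, e (GC.mk (modMk N a, modMk N b)) = QuotientAddGroup.mk (GC.mk (a, b)) :=
  groupCompletion_quotient_iso_general N hMplus
end

section
/- Let M be a Hausdorff topological abelian monoid with the cancellation property such that the naive group completion M⁺ is a Hausdorff topological group, and let σ: M → M be a continuous monoid involution (an additive monoid homomorphism with σ ∘ σ = id). Let M^σ = { m ∈ M : σ(m) = m } be the fixed submonoid with the subspace topology, and let σ act on M⁺ by σ(q(a, b)) = q(σ(a), σ(b)), with (M⁺)^σ the fixed subgroup with the subspace topology. Then the natural continuous group homomorphism (M^σ)⁺ → (M⁺)^σ, sending q(a, b) with a, b ∈ M^σ to the class q(a, b) in M⁺, is an isomorphism of topological groups. -/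
universe u

/-- The submonoid `M^σ` of elements fixed by the involution `σ`. -/
def fixedSubmonoid {M : Type u} [AddCommMonoid M] (σ : M →+ M) : AddSubmonoid M where
  carrier := { m | σ m = m }
  zero_mem' := map_zero σ
  add_mem' := by
    intro a b ha hb
    simp only [Set.mem_setOf_eq] at *
    rw [map_add, ha, hb]

/-- The subgroup `(M⁺)^σ` of the naive group completion fixed by the induced involution. -/
def fixedGCSubgroup {M : Type u} [AddCommMonoid M] (σ : M →+ M) : AddSubgroup (GC M) where
  carrier := { x | GC.map σ x = x }
  zero_mem' := GC.map_zero' σ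
  add_mem' := by
    intro a b ha hb
    simp only [Set.mem_setOf_eq] at *
    rw [GC.map_add', ha, hb]
  neg_mem' := by
    intro a ha
    simp only [Set.mem_setOf_eq] at *
    rw [GC.map_neg', ha]


/-!
A class `q(a, b)` of `M⁺` is fixed by `σ` exactly when `σ a + b = σ b + a`. Then `σ b + a` and
`σ b + b` are fixed points of `σ` and `q(a, b) = q(σ b + a, σ b + b)`, which inverts the natural
map on representatives by a formula that is continuous in `(a, b)`. Since the fixed subgroup is
closed in the Hausdorff space `M⁺`, the quotient map restricts to a quotient map onto it, so the
inverse is continuous.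
-/

open Topology

theorem Topology.IsQuotientMap.restrictPreimage_isClosed {X Y : Type*} [TopologicalSpace X]
    [TopologicalSpace Y] {f : X → Y} (hf : IsQuotientMap f) {s : Set Y} (hs : IsClosed s) :
    IsQuotientMap (s.restrictPreimage f) := by
  refine isQuotientMap_iff_isClosed.2 ⟨hf.surjective.restrictPreimage _, fun U ↦ ?_⟩
  rw [hs.isClosedEmbedding_subtypeVal.isClosed_iff_image_isClosed,
    (isQuotientMap_iff_isClosed.1 hf).2 (Subtype.val '' U),
    (hs.preimage hf.continuous).isClosedEmbedding_subtypeVal.isClosed_iff_image_isClosed,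
    Set.image_val_preimage_restrictPreimage]

theorem Topology.IsQuotientMap.continuous_equiv_symm {X Y Z : Type*} [TopologicalSpace X]
    [TopologicalSpace Y] [TopologicalSpace Z] (e : X ≃ Y) {π : Z → Y} (hπ : IsQuotientMap π)
    {s : Z → X} (hs : Continuous s) (he : ∀ z, e (s z) = π z) : Continuous e.symm := by
  rw [hπ.continuous_iff]
  convert hs using 1
  funext z
  exact e.symm_apply_eq.2 (he z).symm

namespace GC

section AddCommMonoid

variable {M N : Type*} [AddCommMonoid M] [AddCommMonoid N]

theorem mk_add_left (m : M) (p : M × M) : mk (m + p.1, m + p.2) = mk p :=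
  (Quot.sound ⟨m, rfl, rfl⟩).symm

theorem mk_eq_mk_of_add_eq_s2 {p q : M × M} (h : p.1 + q.2 = p.2 + q.1) : mk p = mk q := by
  rw [← mk_add_left q.1 p, ← mk_add_left p.1 q, add_comm q.1 p.1, add_comm q.1 p.2, h,
    add_comm]

def mapHom (f : M →+ N) : GC M →+ GC N where
  toFun := Quot.map (fun p ↦ (f p.1, f p.2)) fun p q ⟨m, h1, h2⟩ ↦
    ⟨f m, by simp [h1], by simp [h2]⟩
  map_zero' := congrArg mk (by simp)
  map_add' := by
    rintro ⟨p⟩ ⟨q⟩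
    exact congrArg mk (by simp)

theorem continuous_mapHom [TopologicalSpace M] [TopologicalSpace N] {f : M →+ N}
    (hf : Continuous f) : Continuous (mapHom f) :=
  continuous_quot_lift _ <| continuous_quot_mk.comp (hf.prodMap hf)

end AddCommMonoid

theorem mk_eq_mk_iff {M : Type*} [AddCancelCommMonoid M] {p q : M × M} :
    mk p = mk q ↔ p.1 + q.2 = p.2 + q.1 := by
  refine ⟨fun h ↦ ?_, mk_eq_mk_of_add_eq_s2⟩
  have hgen : Relation.EqvGen (gcRel M) p q := Quot.eqvGen_exact h
  clear h
  induction hgen with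
  | rel x y hxy =>
    obtain ⟨m, h1, h2⟩ := hxy
    rw [h1, h2]
    abel
  | refl x => exact add_comm _ _
  | symm x y _ ih => rw [add_comm, ← ih, add_comm]
  | trans x y z _ _ ih1 ih2 =>
    refine add_right_cancel (b := y.1 + y.2) ?_
    calc x.1 + z.2 + (y.1 + y.2) = (x.1 + y.2) + (y.1 + z.2) := by abel
      _ = (x.2 + y.1) + (y.2 + z.1) := by rw [ih1, ih2]
      _ = x.2 + z.1 + (y.1 + y.2) := by abel

theorem mapHom_injective {M N : Type*} [AddCommMonoid M] [AddCancelCommMonoid N] {f : M →+ N}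
    (hf : Function.Injective f) : Function.Injective (mapHom f) := by
  rintro ⟨p⟩ ⟨q⟩ h
  refine mk_eq_mk_of_add_eq_s2 (hf ?_)
  simpa only [map_add] using mk_eq_mk_iff.1 h

end GC

section FixedPoints

variable {M : Type*} [AddCancelCommMonoid M] (σ : M →+ M)

theorem isClosed_fixedGCSubgroup [TopologicalSpace M] [T2Space (GC M)] (hσ : Continuous σ) :
    IsClosed (fixedGCSubgroup σ : Set (GC M)) :=
  isClosed_eq (GC.continuous_mapHom hσ) continuous_id

theorem mapHom_subtype_mem_fixedGCSubgroup (x : GC (fixedSubmonoid σ)) :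
    GC.mapHom (fixedSubmonoid σ).subtype x ∈ fixedGCSubgroup σ := by
  rcases x with ⟨a, b⟩
  exact congrArg GC.mk (Prod.ext a.2 b.2)

def fixedCompletionHom : GC (fixedSubmonoid σ) →+ fixedGCSubgroup σ :=
  (GC.mapHom (fixedSubmonoid σ).subtype).codRestrict _ (mapHom_subtype_mem_fixedGCSubgroup σ)

theorem fixedCompletionHom_injective : Function.Injective (fixedCompletionHom σ) :=
  fun _ _ h ↦ GC.mapHom_injective Subtype.val_injective (congrArg Subtype.val h)

theorem continuous_fixedCompletionHom [TopologicalSpace M] :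
    Continuous (fixedCompletionHom σ) :=
  (GC.continuous_mapHom continuous_subtype_val).subtype_mk _

variable {σ}

theorem map_add_self_mem_fixedSubmonoid (hσ : ∀ m, σ (σ m) = m) (b : M) :
    σ b + b ∈ fixedSubmonoid σ := by
  change σ (σ b + b) = σ b + b
  rw [map_add, hσ, add_comm]

theorem map_snd_add_fst_mem_fixedSubmonoid (hσ : ∀ m, σ (σ m) = m) {p : M × M}
    (hp : GC.mk p ∈ fixedGCSubgroup σ) : σ p.2 + p.1 ∈ fixedSubmonoid σ := by
  have hfix : σ p.1 + p.2 = σ p.2 + p.1 := GC.mk_eq_mk_iff.1 hp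
  change σ (σ p.2 + p.1) = σ p.2 + p.1
  rw [map_add, hσ, add_comm, hfix]

def fixedCompletionInvRepr (hσ : ∀ m, σ (σ m) = m)
    (p : GC.mk ⁻¹' (fixedGCSubgroup σ : Set (GC M))) : GC (fixedSubmonoid σ) :=
  GC.mk (⟨σ p.1.2 + p.1.1, map_snd_add_fst_mem_fixedSubmonoid hσ p.2⟩,
    ⟨σ p.1.2 + p.1.2, map_add_self_mem_fixedSubmonoid hσ p.1.2⟩)

theorem fixedCompletionHom_invRepr (hσ : ∀ m, σ (σ m) = m)
    (p : GC.mk ⁻¹' (fixedGCSubgroup σ : Set (GC M))) :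
    fixedCompletionHom σ (fixedCompletionInvRepr hσ p) = ⟨GC.mk p.1, p.2⟩ :=
  Subtype.ext (GC.mk_add_left (σ p.1.2) p.1)

theorem fixedCompletionHom_surjective (hσ : ∀ m, σ (σ m) = m) :
    Function.Surjective (fixedCompletionHom σ) := by
  rintro ⟨⟨p⟩, hp⟩
  exact ⟨_, fixedCompletionHom_invRepr hσ ⟨p, hp⟩⟩

theorem continuous_fixedCompletionInvRepr [TopologicalSpace M] [ContinuousAdd M]
    (hσc : Continuous σ) (hσ : ∀ m, σ (σ m) = m) : Continuous (fixedCompletionInvRepr hσ) := by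
  have hfst : Continuous fun p : GC.mk ⁻¹' (fixedGCSubgroup σ : Set (GC M)) ↦ p.1.1 :=
    continuous_fst.comp continuous_subtype_val
  have hsnd : Continuous fun p : GC.mk ⁻¹' (fixedGCSubgroup σ : Set (GC M)) ↦ p.1.2 :=
    continuous_snd.comp continuous_subtype_val
  exact continuous_quot_mk.comp <|
    (((hσc.comp hsnd).add hfst).subtype_mk _).prodMk (((hσc.comp hsnd).add hsnd).subtype_mk _)

end FixedPoints

theorem groupCompletion_fixedPoints_iso_general
    {M : Type u} [AddCancelCommMonoid M] [TopologicalSpace M] [ContinuousAdd M]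
    (hMplusT2 : T2Space (GC M))
    (σ : M →+ M) (hσcont : Continuous σ) (hσinv : ∀ m, σ (σ m) = m) :
    ∃ e : GC ↥(fixedSubmonoid σ) ≃ₜ ↥(fixedGCSubgroup σ),
      (∀ x y, e (x + y) = e x + e y) ∧
      ∀ a b : ↥(fixedSubmonoid σ),
        (e (GC.mk (a, b)) : GC M) = GC.mk ((a : M), (b : M)) := by
  let e := Equiv.ofBijective _
    ⟨fixedCompletionHom_injective σ, fixedCompletionHom_surjective hσinv⟩
  have hquot : IsQuotientMap ((fixedGCSubgroup σ : Set (GC M)).restrictPreimage GC.mk) :=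
    isQuotientMap_quot_mk.restrictPreimage_isClosed (isClosed_fixedGCSubgroup σ hσcont)
  have he_symm : Continuous e.symm :=
    hquot.continuous_equiv_symm e (continuous_fixedCompletionInvRepr hσcont hσinv)
      (fixedCompletionHom_invRepr hσinv)
  exact ⟨⟨e, continuous_fixedCompletionHom σ, he_symm⟩, map_add (fixedCompletionHom σ),
    fun _ _ ↦ rfl⟩

/-- Let `M` be a Hausdorff topological abelian monoid with the cancellation
property whose naive group completion `M⁺` is a Hausdorff topological group, and let `σ` be a
continuous monoid involution of `M`.  Then the natural continuous group homomorphism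
`(M^σ)⁺ → (M⁺)^σ`, sending `q(a, b)` with `a, b ∈ M^σ` to the class `q(a, b)` in `M⁺`, is an
isomorphism of topological groups. -/
theorem groupCompletion_fixedPoints_iso
    {M : Type u} [AddCancelCommMonoid M] [TopologicalSpace M] [T2Space M] [ContinuousAdd M]
    (hMplus : IsTopologicalAddGroup (GC M)) (hMplusT2 : T2Space (GC M))
    (σ : M →+ M) (hσcont : Continuous σ) (hσinv : ∀ m, σ (σ m) = m) :
    ∃ e : GC ↥(fixedSubmonoid σ) ≃ₜ ↥(fixedGCSubgroup σ),
      (∀ x y, e (x + y) = e x + e y) ∧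
      ∀ a b : ↥(fixedSubmonoid σ),
        (e (GC.mk (a, b)) : GC M) = GC.mk ((a : M), (b : M)) :=
  groupCompletion_fixedPoints_iso_general hMplusT2 σ hσcont hσinv
end
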